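/- Let $Q$ be a uniformly random $\tau$-th root of unity (with $\tau \geq 1$) and let $Y_1, \ldots, Y_t$ be i.i.d. random variables, each uniform on $S = \{2^0, \ldots, 2^{t-1}\}$, independent of $Q$, where $\tau = 2^t - 1$. Then $\mathbf{E}[Q^{Y_1 + \cdots + Y_t}] = t!/t^t$. -/

import Mathlib

/-!
Averaging over `j` turns `E[Q^k]` into the indicator of `2^t - 1 ∣ k`, so the left side is
`t^{-t}` times the number of `a : Fin t → Fin t` with `2^t - 1 ∣ ∑ 2^{a i}`. Modulo `2^t - 1`
two equal summands `2^a + 2^a` can be merged into the single summand `2^{(a+1) % t}`, so a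
nonempty multiset of powers `2^a` (`a < t`) with sum divisible by `2^t - 1` has at least `t`
elements, and exactly `t` only if the exponents are distinct, i.e. `a` is a permutation.
Hence there are `t!` such `a`.
-/

open Finset

lemma Nat.sum_range_two_pow (t : ℕ) : ∑ k ∈ range t, 2 ^ k = 2 ^ t - 1 := by
  simpa using Nat.geomSum_eq le_rfl t

lemma Nat.two_pow_modEq_two_pow_mod (t n : ℕ) : 2 ^ n ≡ 2 ^ (n % t) [MOD 2 ^ t - 1] := by
  have h2t : 2 ^ t ≡ 1 [MOD 2 ^ t - 1] :=
    ((Nat.modEq_iff_dvd' Nat.one_le_two_pow).mpr dvd_rfl).symm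
  calc 2 ^ n = (2 ^ t) ^ (n / t) * 2 ^ (n % t) := by
        rw [← pow_mul, ← pow_add, Nat.div_add_mod]
    _ ≡ 1 ^ (n / t) * 2 ^ (n % t) [MOD 2 ^ t - 1] := (h2t.pow _).mul_right _
    _ = 2 ^ (n % t) := by rw [one_pow, one_mul]

lemma Finset.eq_range_of_dvd_sum_two_pow {t : ℕ} {F : Finset ℕ} (hF : F ⊆ range t)
    (hne : F.Nonempty) (hdvd : 2 ^ t - 1 ∣ ∑ a ∈ F, 2 ^ a) : F = range t := by
  have hpos : 0 < ∑ a ∈ F, 2 ^ a := sum_pos (fun _ _ => Nat.two_pow_pos _) hne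
  have hlt : ∑ a ∈ F, 2 ^ a < 2 ^ t :=
    Nat.geomSum_lt le_rfl fun a ha => mem_range.mp (hF ha)
  have hsum : ∑ a ∈ F, 2 ^ a = 2 ^ t - 1 := (Nat.le_of_dvd hpos hdvd).antisymm' (by omega)
  have hrest : ∑ a ∈ range t \ F, 2 ^ a = 0 := by
    have := sum_sdiff (f := (2 ^ ·)) hF
    rw [hsum, Nat.sum_range_two_pow] at this
    omega
  rw [sum_eq_zero_iff] at hrest
  refine hF.antisymm fun a ha => ?_
  by_contra haF
  exact (Nat.two_pow_pos a).ne' (hrest a (mem_sdiff.mpr ⟨ha, haF⟩))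

lemma Multiset.exists_modEq_sum_two_pow_of_not_nodup {t : ℕ} {s : Multiset ℕ}
    (hs : ¬ s.Nodup) (hlt : ∀ a ∈ s, a < t) :
    ∃ s' : Multiset ℕ, card s' + 1 = card s ∧ s' ≠ 0 ∧ (∀ a ∈ s', a < t) ∧
      (s'.map (2 ^ ·)).sum ≡ (s.map (2 ^ ·)).sum [MOD 2 ^ t - 1] := by
  obtain ⟨a, r, rfl⟩ : ∃ a r, s = a ::ₘ a ::ₘ r := by
    simpa [Multiset.nodup_iff_ne_cons_cons] using hs
  have ht : 0 < t := (hlt a (by simp)).trans_le' (Nat.zero_le a)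
  refine ⟨((a + 1) % t) ::ₘ r, by simp, by simp, ?_, ?_⟩
  · simp only [Multiset.mem_cons, forall_eq_or_imp] at hlt ⊢
    exact ⟨Nat.mod_lt _ ht, hlt.2.2⟩
  · have : 2 ^ a + (2 ^ a + (r.map (2 ^ ·)).sum) = 2 ^ (a + 1) + (r.map (2 ^ ·)).sum := by
      ring
    simp only [Multiset.map_cons, Multiset.sum_cons, this]
    exact ((Nat.two_pow_modEq_two_pow_mod t (a + 1)).symm).add_right _

lemma Multiset.le_card_of_dvd_sum_two_pow {t : ℕ} {s : Multiset ℕ} (hs : s ≠ 0)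
    (hlt : ∀ a ∈ s, a < t) (hdvd : 2 ^ t - 1 ∣ (s.map (2 ^ ·)).sum) : t ≤ card s := by
  induction h : card s using Nat.strong_induction_on generalizing s with
  | _ n ih =>
  subst h
  by_cases hnd : s.Nodup
  · have hF := eq_range_of_dvd_sum_two_pow (F := ⟨s, hnd⟩)
      (fun a ha => mem_range.mpr (hlt a ha))
      (nonempty_iff_ne_empty.mpr (by simpa [← val_eq_zero] using hs)) hdvd
    simpa using (congrArg Finset.card hF).ge
  · obtain ⟨s', hcard, hs', hlt', hmod⟩ := exists_modEq_sum_two_pow_of_not_nodup hnd hlt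
    have := ih _ (by omega) hs' hlt' ((hmod.dvd_iff dvd_rfl).mpr hdvd) rfl
    omega

lemma Multiset.nodup_of_dvd_sum_two_pow {t : ℕ} {s : Multiset ℕ} (hcard : card s = t)
    (hlt : ∀ a ∈ s, a < t) (hdvd : 2 ^ t - 1 ∣ (s.map (2 ^ ·)).sum) : s.Nodup := by
  by_contra hnd
  obtain ⟨s', hcard', hs', hlt', hmod⟩ := exists_modEq_sum_two_pow_of_not_nodup hnd hlt
  have := le_card_of_dvd_sum_two_pow hs' hlt' ((hmod.dvd_iff dvd_rfl).mpr hdvd)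
  omega

lemma dvd_sum_two_pow_iff_bijective {t : ℕ} (a : Fin t → Fin t) :
    2 ^ t - 1 ∣ ∑ i, 2 ^ (a i : ℕ) ↔ a.Bijective := by
  constructor
  · intro hdvd
    have hnd : (univ.val.map fun i => (a i : ℕ)).Nodup := by
      refine Multiset.nodup_of_dvd_sum_two_pow (t := t) (by simp) (by simp) ?_
      rwa [Multiset.map_map]
    rw [Multiset.nodup_map_iff_inj_on univ.nodup] at hnd
    exact Finite.injective_iff_bijective.mp fun i j hij =>
      hnd i (mem_univ i) j (mem_univ j) (congrArg Fin.val hij)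
  · intro ha
    rw [Fintype.sum_bijective a ha _ (fun j => 2 ^ (j : ℕ)) fun _ => rfl,
      Fin.sum_univ_eq_sum_range (2 ^ ·), Nat.sum_range_two_pow]

lemma Fintype.card_filter_bijective (α : Type*) [Fintype α] [DecidableEq α] :
    #{f : α → α | f.Bijective} = (card α).factorial := by
  rw [← Fintype.card_subtype, ← Fintype.card_perm]
  exact Fintype.card_congr
    { toFun := fun f => Equiv.ofBijective f f.2
      invFun := fun e => ⟨e, e.bijective⟩
      left_inv := fun _ => rfl
      right_inv := fun _ => Equiv.ext fun _ => rfl }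

lemma IsPrimitiveRoot.sum_range_pow_pow_eq_ite {K : Type*} [Field K] {ζ : K} {τ : ℕ}
    (hζ : IsPrimitiveRoot ζ τ) (k : ℕ) :
    ∑ j ∈ range τ, (ζ ^ j) ^ k = if τ ∣ k then (τ : K) else 0 := by
  simp_rw [← pow_mul, mul_comm _ k, pow_mul]
  split_ifs with hk
  · simp [(hζ.pow_eq_one_iff_dvd k).mpr hk]
  · have hne : ζ ^ k ≠ 1 := fun h => hk ((hζ.pow_eq_one_iff_dvd k).mp h)
    rw [geom_sum_eq hne, ← pow_mul, mul_comm, pow_mul, hζ.pow_eq_one, one_pow, sub_self,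
      zero_div]

lemma Complex.exp_two_pi_I_mul_div (τ j : ℕ) :
    Complex.exp (2 * Real.pi * Complex.I * j / τ) =
      Complex.exp (2 * Real.pi * Complex.I / τ) ^ j := by
  rw [← Complex.exp_nat_mul]
  ring_nf

lemma card_filter_dvd_sum_two_pow (t : ℕ) :
    #{y ∈ Fintype.piFinset (fun _ : Fin t => (range t).image (2 ^ ·)) | 2 ^ t - 1 ∣ ∑ i, y i}
      = t.factorial := by
  have hrange : (range t).image (2 ^ ·) = univ.image fun j : Fin t => 2 ^ (j : ℕ) := by
    ext; simp [Fin.exists_iff]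
  have hinj : Function.Injective fun (a : Fin t → Fin t) i => 2 ^ (a i : ℕ) :=
    fun a b hab => funext fun i =>
      Fin.ext (Nat.pow_right_injective le_rfl (congrFun hab i))
  simp_rw [hrange, Fintype.piFinset_image, Fintype.piFinset_univ, filter_image,
    card_image_of_injective _ hinj, dvd_sum_two_pow_iff_bijective]
  simpa using Fintype.card_filter_bijective (Fin t)

/-- For `Q` a uniformly random `τ`-th root of unity (`τ = 2^t - 1`) and
`Y_1,…,Y_t` i.i.d. uniform on `S = {2^0,…,2^{t-1}}`, independent of `Q`,
`E[Q^{Y_1+⋯+Y_t}] = t!/t^t`. The expectation is written out as the average over the joint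
uniform distribution on `{0,…,τ-1} × S^t`. -/
theorem stmt6 (t : ℕ) (ht : 1 ≤ t) (τ : ℕ) (hτ : τ = 2 ^ t - 1) :
    (1 / ((τ : ℂ) * (t : ℂ) ^ t)) *
      ∑ j ∈ Finset.range τ,
        ∑ y ∈ Fintype.piFinset (fun _ : Fin t => (Finset.range t).image (2 ^ ·)),
          Complex.exp (2 * Real.pi * Complex.I * j / τ) ^ (∑ i, y i)
      = (t.factorial : ℂ) / (t : ℂ) ^ t := by
  subst hτ
  have hτ0 : 2 ^ t - 1 ≠ 0 := by
    have := Nat.one_lt_two_pow (n := t) (by omega)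
    omega
  simp_rw [Complex.exp_two_pi_I_mul_div, sum_comm (s := range (2 ^ t - 1)),
    (Complex.isPrimitiveRoot_exp _ hτ0).sum_range_pow_pow_eq_ite, sum_ite, sum_const_zero,
    add_zero, sum_const, card_filter_dvd_sum_two_pow, nsmul_eq_mul]
  have : (t : ℂ) ≠ 0 := Nat.cast_ne_zero.mpr (by omega)
  field_simp
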